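/- For all z, w in the tube domain T_B, the Cauchy–Schwarz-type inequality |ρ(z,w)|² ≥ ρ(z) ρ(w) holds, where ρ(z) = ρ(z,z); equivalently, 1 - ρ(z)ρ(w)/|ρ(z,w)|² ∈ [0,1) so the Bergman distance formula β(z,w) = tanh⁻¹√(1 - ρ(z)ρ(w)/|ρ(z,w)|²) is well defined. -/

import Mathlib

/- We model ℂ^(n+1) (the paper's ℂⁿ with n := n+1) as (Fin n → ℂ) × ℂ,
   writing z = (z', z_n).  All occurrences of the paper's dimension `n`
   therefore become `n + 1` below. -/

noncomputable section

open MeasureTheory Complex Set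

/-- The ambient space ℂ^(n+1), split as (z', z_n). -/
abbrev TubeC (n : ℕ) := (Fin n → ℂ) × ℂ

/-- ρ(z,w) = (1/4)((z'-conj w')·(z'-conj w') - 2i(z_n - conj w_n)). -/
def rhoK {n : ℕ} (z w : TubeC n) : ℂ :=
  (1/4 : ℂ) * ((∑ j, (z.1 j - (starRingEnd ℂ) (w.1 j)) ^ 2)
    - 2 * Complex.I * (z.2 - (starRingEnd ℂ) w.2))

/-- ρ(z) = Im z_n - |Im z'|². -/
def rhoR {n : ℕ} (z : TubeC n) : ℝ := z.2.im - ∑ j, (z.1 j).im ^ 2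

/-- The tube domain T_B. -/
def TB (n : ℕ) : Set (TubeC n) := {z | ∑ j, (z.1 j).im ^ 2 < z.2.im}

/-- Inverse hyperbolic tangent. -/
def artanh (x : ℝ) : ℝ := (1/2) * Real.log ((1 + x) / (1 - x))

/-- The Bergman distance on T_B. -/
def betaB {n : ℕ} (z w : TubeC n) : ℝ :=
  artanh (Real.sqrt (1 - rhoR z * rhoR w / ‖rhoK z w‖ ^ 2))

/-- The Bergman metric ball D(z,r). -/
def DB {n : ℕ} (z : TubeC n) (r : ℝ) : Set (TubeC n) := {w ∈ TB n | betaB z w < r}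

/-- Euclidean norm of a point of ℂ^(n+1). -/
def euclidNorm {n : ℕ} (z : TubeC n) : ℝ :=
  Real.sqrt ((∑ j, ‖z.1 j‖ ^ 2) + ‖z.2‖ ^ 2)

/-- The point 𝐢 = (0', i). -/
def iPt (n : ℕ) : TubeC n := (0, Complex.I)

/-!
Taking real parts, `Re ρ(z,w) = (ρ(z) + ρ(w))/2 + |z' - w'|²/4`, so by AM–GM
`|ρ(z,w)| ≥ Re ρ(z,w) ≥ (ρ(z) + ρ(w))/2 ≥ √(ρ(z)ρ(w))`. On `T_B` both `ρ(z), ρ(w)` are positive,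
so `ρ(z,w) ≠ 0` and `ρ(z)ρ(w)/|ρ(z,w)|² ∈ (0, 1]`.
-/

lemma re_sub_conj_sq (a b : ℂ) :
    ((a - (starRingEnd ℂ) b) ^ 2).re = normSq (a - b) - 2 * a.im ^ 2 - 2 * b.im ^ 2 := by
  simp only [sq, mul_re, sub_re, sub_im, conj_re, conj_im, normSq_apply]
  ring

lemma re_rhoK {n : ℕ} (z w : TubeC n) :
    (rhoK z w).re = (rhoR z + rhoR w) / 2 + (∑ j, normSq (z.1 j - w.1 j)) / 4 := by
  have hsum : (∑ j, (z.1 j - (starRingEnd ℂ) (w.1 j)) ^ 2).re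
      = ∑ j, normSq (z.1 j - w.1 j) - 2 * ∑ j, (z.1 j).im ^ 2 - 2 * ∑ j, (w.1 j).im ^ 2 := by
    simp only [re_sum, re_sub_conj_sq, Finset.sum_sub_distrib, Finset.mul_sum]
  simp only [rhoK, rhoR, mul_re, sub_re, sub_im, mul_im, I_re, I_im, conj_re, conj_im, hsum]
  norm_num
  ring

lemma add_div_two_le_re_rhoK {n : ℕ} (z w : TubeC n) :
    (rhoR z + rhoR w) / 2 ≤ (rhoK z w).re := by
  rw [re_rhoK]
  have : 0 ≤ ∑ j, normSq (z.1 j - w.1 j) := Finset.sum_nonneg fun j _ => normSq_nonneg _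
  linarith

lemma rhoR_mul_rhoR_le_norm_rhoK_sq {n : ℕ} (z w : TubeC n) (h : 0 ≤ rhoR z + rhoR w) :
    rhoR z * rhoR w ≤ ‖rhoK z w‖ ^ 2 :=
  calc rhoR z * rhoR w ≤ ((rhoR z + rhoR w) / 2) ^ 2 := by nlinarith [sq_nonneg (rhoR z - rhoR w)]
    _ ≤ (rhoK z w).re ^ 2 := pow_le_pow_left₀ (by linarith) (add_div_two_le_re_rhoK z w) 2
    _ ≤ ‖rhoK z w‖ ^ 2 :=
      pow_le_pow_left₀ ((by linarith : (0 : ℝ) ≤ _).trans (add_div_two_le_re_rhoK z w))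
        (re_le_norm _) 2

lemma rhoK_ne_zero {n : ℕ} (z w : TubeC n) (h : 0 < rhoR z + rhoR w) : rhoK z w ≠ 0 := by
  intro h0
  have := add_div_two_le_re_rhoK z w
  rw [h0, zero_re] at this
  linarith

lemma rhoR_pos {n : ℕ} {z : TubeC n} (hz : z ∈ TB n) : 0 < rhoR z := sub_pos.mpr hz

/-- |ρ(z,w)|² ≥ ρ(z)ρ(w), and 1 - ρ(z)ρ(w)/|ρ(z,w)|² ∈ [0,1). -/
theorem stmt_2 (n : ℕ) (z w : TubeC n) (hz : z ∈ TB n) (hw : w ∈ TB n) :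
    rhoR z * rhoR w ≤ ‖rhoK z w‖ ^ 2 ∧
    (1 - rhoR z * rhoR w / ‖rhoK z w‖ ^ 2) ∈ Set.Ico (0 : ℝ) 1 := by
  have hsum : 0 < rhoR z + rhoR w := add_pos (rhoR_pos hz) (rhoR_pos hw)
  have hle := rhoR_mul_rhoR_le_norm_rhoK_sq z w hsum.le
  have hnorm : 0 < ‖rhoK z w‖ ^ 2 := by
    have := rhoK_ne_zero z w hsum
    positivity
  have hratio_le : rhoR z * rhoR w / ‖rhoK z w‖ ^ 2 ≤ 1 := (div_le_one hnorm).mpr hle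
  have hratio_pos : 0 < rhoR z * rhoR w / ‖rhoK z w‖ ^ 2 :=
    div_pos (mul_pos (rhoR_pos hz) (rhoR_pos hw)) hnorm
  exact ⟨hle, by linarith, by linarith⟩
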